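/- arXiv:1603.01205 — 2 statements merged into one kernel-verified Lean document; each statement's English description precedes it below -/
import Mathlib

section
/- If (Γ, μ) is a weighted graph with modulus δ, then the degree of every vertex of Γ is at most δ², i.e. deg(Γ) ≤ δ². -/
/-- If `(Γ, μ)` is a weighted graph with modulus `δ`, then the degree
of every vertex (the number of oriented edges with source that vertex) is at most `δ²`;
hence `deg(Γ) ≤ δ²`. -/
theorem stmt_2 {E V : Type*} [Countable E] [Countable V]
    (s t : E → V) (bar : E → E)
    (hbars : ∀ a, s (bar a) = t a) (hbart : ∀ a, t (bar a) = s a)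
    (hlocfin : ∀ v, {a : E | s a = v}.Finite)
    (hconn : ∀ v w : V, Relation.ReflTransGen (fun x y => ∃ a, s a = x ∧ t a = y) v w)
    (μ : E → ℝ) (hpos : ∀ a, 0 < μ a)
    (hμ : ∀ p q : List E, p ≠ [] → q ≠ [] →
      p.Chain' (fun a b => t a = s b) → q.Chain' (fun a b => t a = s b) →
      Option.map s p.head? = Option.map s q.head? →
      Option.map t p.getLast? = Option.map t q.getLast? →
      (p.map μ).prod = (q.map μ).prod)
    (δ : ℝ) (hδ : 0 < δ)
    (hmod : ∀ v : V, ∑ᶠ a ∈ {a : E | s a = v}, μ a = δ) :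
    ∀ v : V, (({a : E | s a = v}).ncard : ℝ) ≤ δ ^ 2 := by
  -- Step 1: μ a * μ (bar a) = 1 for every edge a.
  have hinv : ∀ a, μ a * μ (bar a) = 1 := by
    intro a
    have h := hμ [a, bar a] [a, bar a, a, bar a] (by simp) (by simp)
      (by simp [List.Chain', List.isChain_cons_cons, hbars, hbart])
      (by simp [List.Chain', List.isChain_cons_cons, hbars, hbart])
      (by simp) (by simp)
    simp only [List.map_cons, List.map_nil, List.prod_cons, List.prod_nil, mul_one] at h
    have hx : 0 < μ a * μ (bar a) := mul_pos (hpos a) (hpos (bar a))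
    nlinarith [h, hx]
  -- Step 2: every single weight is bounded by δ.
  have hle : ∀ a : E, μ a ≤ δ := by
    intro a
    have hfin := hlocfin (s a)
    rw [← hmod (s a), finsum_mem_eq_finite_toFinset_sum _ hfin]
    have ha : a ∈ hfin.toFinset := by simp
    exact Finset.single_le_sum (fun b _ => (hpos b).le) ha
  -- Hence μ a ≥ 1/δ.
  have hlow : ∀ a : E, 1 / δ ≤ μ a := by
    intro a
    have h1 : μ (bar a) ≤ δ := hle (bar a)
    have h2 : μ a = 1 / μ (bar a) :=
      eq_one_div_of_mul_eq_one_right (by linarith [hinv a])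
    rw [h2]
    exact one_div_le_one_div_of_le (hpos (bar a)) h1
  intro v
  have hfin := hlocfin v
  have hsum : ∑ a ∈ hfin.toFinset, μ a = δ := by
    rw [← hmod v, finsum_mem_eq_finite_toFinset_sum _ hfin]
  have hcard : ({a : E | s a = v}).ncard = hfin.toFinset.card :=
    Set.ncard_eq_toFinset_card _ hfin
  have hge : (hfin.toFinset.card : ℝ) * (1 / δ) ≤ δ := by
    calc (hfin.toFinset.card : ℝ) * (1 / δ)
        = ∑ _a ∈ hfin.toFinset, (1 / δ) := by
          rw [Finset.sum_const, nsmul_eq_mul]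
      _ ≤ ∑ a ∈ hfin.toFinset, μ a := Finset.sum_le_sum fun a _ => hlow a
      _ = δ := hsum
  rw [hcard]
  have := mul_le_mul_of_nonneg_right hge hδ.le
  rw [mul_assoc, one_div_mul_cancel hδ.ne', mul_one] at this
  nlinarith [this]
end

section
/- Let H < G be an almost normal subgroup with G/H countable, (A,τ) an algebra with a G-action γ : G → Aut(A), and ℂ[A;G,H] the space of functions f : G → A with f(hgk) = γ_h(f(g)) for h,k ∈ H whose induced function on G/H is finitely supported. Then the convolution product (f₁f₂)(g) = ∑_{s ∈ ⟨G/H⟩} f₁(s)·γ_s(f₂(s⁻¹g)) is well defined (independent of the system of representatives ⟨G/H⟩) and associative, making ℂ[A;G,H] a unital associative algebra. -/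
open scoped Classical

/-- `R` is a system of representatives of the left coset space `G/H`. -/
def IsRep {G : Type*} [Group G] (H : Subgroup G) (R : Set G) : Prop :=
  ∀ g : G, ∃! r, r ∈ R ∧ r⁻¹ * g ∈ H

/-- Membership in the Hecke crossed product `ℂ[A;G,H]`: `H`-equivariance and
finite support modulo `H`. -/
def HeckeMem {G A : Type*} [Group G] [Ring A] (H : Subgroup G)
    (γ : G → A ≃+* A) (f : G → A) : Prop :=
  (∀ h k g : G, h ∈ H → k ∈ H → f (h * g * k) = γ h (f g)) ∧
  ((QuotientGroup.mk : G → G ⧸ H) '' Function.support f).Finite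

/-- Convolution product on `ℂ[A;G,H]` relative to a system of representatives `R`. -/
noncomputable def heckeConv {G A : Type*} [Group G] [Ring A]
    (γ : G → A ≃+* A) (R : Set G) (f₁ f₂ : G → A) : G → A :=
  fun g => ∑ᶠ s ∈ R, f₁ s * γ s (f₂ (s⁻¹ * g))

/-- The unit of `ℂ[A;G,H]`: the function equal to `1` on `H` and `0` elsewhere. -/
noncomputable def heckeOne {G A : Type*} [Group G] [Ring A] (H : Subgroup G) : G → A :=
  fun g => if g ∈ H then 1 else 0

section Aux

open Function Set
open scoped Pointwise

variable {G A : Type*} [Group G] [Ring A] {H : Subgroup G} {γ : G → A ≃+* A}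

lemma gamma_cancel (hγ1 : γ 1 = RingEquiv.refl A)
    (hγm : ∀ (g h : G) (a : A), γ (g * h) a = γ g (γ h a))
    (h : G) (a : A) : γ h (γ h⁻¹ a) = a := by
  rw [← hγm, mul_inv_cancel, hγ1]; rfl

lemma hm_right_inv (hγ1 : γ 1 = RingEquiv.refl A) {f : G → A}
    (hf : HeckeMem H γ f) {k : G} (hk : k ∈ H) (g : G) :
    f (g * k) = f g := by
  have := hf.1 1 k g H.one_mem hk
  simpa [hγ1] using this

lemma hm_left_eq {f : G → A} (hf : HeckeMem H γ f) {h : G} (hh : h ∈ H) (g : G) :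
    f (h * g) = γ h (f g) := by
  have := hf.1 h 1 g hh H.one_mem
  simpa using this

lemma isRep_injOn_mk {R : Set G} (hR : IsRep H R) :
    Set.InjOn (QuotientGroup.mk : G → G ⧸ H) R := by
  intro a ha b hb hab
  obtain ⟨r, -, hu⟩ := hR a
  have h1 : a ∈ R ∧ a⁻¹ * a ∈ H := ⟨ha, by rw [inv_mul_cancel]; exact H.one_mem⟩
  have h2 : b ∈ R ∧ b⁻¹ * a ∈ H := ⟨hb, QuotientGroup.eq.mp hab.symm⟩
  exact (hu a h1).trans (hu b h2).symm

lemma isRep_image_mk {R : Set G} (hR : IsRep H R) :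
    (QuotientGroup.mk : G → G ⧸ H) '' R = Set.univ := by
  ext q
  induction q using QuotientGroup.induction_on with
  | H g =>
    obtain ⟨r, ⟨hrR, hrH⟩, -⟩ := hR g
    exact ⟨fun _ => trivial, fun _ => ⟨r, hrR, QuotientGroup.eq.mpr hrH⟩⟩

lemma sum_rep_eq {R R' : Set G} (hR : IsRep H R) (hR' : IsRep H R') (t : G → A)
    (ht : ∀ s h, h ∈ H → t (s * h) = t s) :
    ∑ᶠ s ∈ R, t s = ∑ᶠ s ∈ R', t s := by
  have key : ∀ (S : Set G), IsRep H S →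
      ∑ᶠ s ∈ S, t s = ∑ᶠ q : G ⧸ H, t q.out := by
    intro S hS
    have h1 : ∀ s : G, t ((QuotientGroup.mk s : G ⧸ H).out) = t s := by
      intro s
      have hmem : s⁻¹ * (QuotientGroup.mk s : G ⧸ H).out ∈ H :=
        QuotientGroup.eq.mp (QuotientGroup.out_eq' (QuotientGroup.mk s : G ⧸ H)).symm
      have : (QuotientGroup.mk s : G ⧸ H).out
          = s * (s⁻¹ * (QuotientGroup.mk s : G ⧸ H).out) := by group
      rw [this, ht s _ hmem]
    calc ∑ᶠ s ∈ S, t s = ∑ᶠ s ∈ S, t ((QuotientGroup.mk s : G ⧸ H).out) :=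
          finsum_mem_congr rfl (fun s _ => (h1 s).symm)
      _ = ∑ᶠ q ∈ (QuotientGroup.mk : G → G ⧸ H) '' S, t q.out :=
          (finsum_mem_image (f := fun q : G ⧸ H => t q.out) (isRep_injOn_mk hS)).symm
      _ = ∑ᶠ q ∈ (Set.univ : Set (G ⧸ H)), t q.out := by rw [isRep_image_mk hS]
      _ = ∑ᶠ q : G ⧸ H, t q.out := finsum_mem_univ _
  rw [key R hR, key R' hR']

lemma isRep_smul {R : Set G} (hR : IsRep H R) (x : G) :
    IsRep H ((x * ·) '' R) := by
  intro g
  obtain ⟨r, ⟨hrR, hrH⟩, hu⟩ := hR (x⁻¹ * g)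
  refine ⟨x * r, ⟨⟨r, hrR, rfl⟩, ?_⟩, ?_⟩
  · have : (x * r)⁻¹ * g = r⁻¹ * (x⁻¹ * g) := by group
    rw [this]; exact hrH
  · rintro y ⟨⟨r', hr', rfl⟩, hy⟩
    have : (x * r')⁻¹ * g = r'⁻¹ * (x⁻¹ * g) := by group
    rw [this] at hy
    rw [hu r' ⟨hr', hy⟩]

lemma finite_inter_support {R : Set G} {f : G → A} (hR : IsRep H R)
    (hf : HeckeMem H γ f) : (R ∩ Function.support f).Finite := by
  apply Set.Finite.of_finite_image _ ((isRep_injOn_mk hR).mono inter_subset_left)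
  exact hf.2.subset (Set.image_mono inter_subset_right)

lemma finsum_mem_restrict {s t : Set G} (f : G → A) (h : ∀ x ∈ s, x ∉ t → f x = 0) :
    ∑ᶠ i ∈ s, f i = ∑ᶠ i ∈ s ∩ t, f i := by
  apply finsum_mem_inter_support_eq'
  intro x hx
  exact ⟨fun hs => ⟨hs, by_contra fun ht => hx (h x hs ht)⟩, fun h' => h'.1⟩

lemma conv_summand_inv (hγ1 : γ 1 = RingEquiv.refl A)
    (hγm : ∀ (g h : G) (a : A), γ (g * h) a = γ g (γ h a))
    {f₁ f₂ : G → A} (h1 : HeckeMem H γ f₁) (h2 : HeckeMem H γ f₂)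
    (g s h : G) (hh : h ∈ H) :
    f₁ (s * h) * γ (s * h) (f₂ ((s * h)⁻¹ * g)) = f₁ s * γ s (f₂ (s⁻¹ * g)) := by
  rw [hm_right_inv hγ1 h1 hh]
  congr 1
  have e1 : (s * h)⁻¹ * g = h⁻¹ * (s⁻¹ * g) := by group
  rw [e1, hm_left_eq h2 (inv_mem hh), hγm, gamma_cancel hγ1 hγm]

lemma support_conv_subset {R : Set G} {f₁ f₂ : G → A} :
    Function.support (heckeConv γ R f₁ f₂)
      ⊆ ⋃ s ∈ R ∩ Function.support f₁, s • Function.support f₂ := by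
  intro g hg
  rw [Function.mem_support] at hg
  by_contra hc
  apply hg
  apply finsum_mem_of_eqOn_zero
  intro s hs
  rcases eq_or_ne (f₁ s) 0 with h | h
  · simp [h]
  · have hf2 : f₂ (s⁻¹ * g) = 0 := by
      by_contra h2
      exact hc (Set.mem_biUnion ⟨hs, h⟩
        (Set.mem_smul_set.mpr ⟨s⁻¹ * g, h2, by rw [smul_eq_mul]; group⟩))
    simp [hf2]

lemma finite_mk_biUnion {S : Set G} (hS : S.Finite) {f₂ : G → A}
    (h2 : HeckeMem H γ f₂) :
    ((QuotientGroup.mk : G → G ⧸ H) '' ⋃ s ∈ S, s • Function.support f₂).Finite := by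
  rw [Set.image_iUnion₂]
  apply Set.Finite.biUnion hS
  intro s _
  rw [Set.image_smul_comm (QuotientGroup.mk : G → G ⧸ H) s (Function.support f₂) (fun x => rfl)]
  exact h2.2.smul_set

lemma conv_wd (hγ1 : γ 1 = RingEquiv.refl A)
    (hγm : ∀ (g h : G) (a : A), γ (g * h) a = γ g (γ h a))
    {R R' : Set G} (hR : IsRep H R) (hR' : IsRep H R')
    {f₁ f₂ : G → A} (h1 : HeckeMem H γ f₁) (h2 : HeckeMem H γ f₂) :
    heckeConv γ R f₁ f₂ = heckeConv γ R' f₁ f₂ := by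
  funext g
  exact sum_rep_eq hR hR' _ (fun s h hh => conv_summand_inv hγ1 hγm h1 h2 g s h hh)

lemma conv_mem (hγ1 : γ 1 = RingEquiv.refl A)
    (hγm : ∀ (g h : G) (a : A), γ (g * h) a = γ g (γ h a))
    {R : Set G} (hR : IsRep H R)
    {f₁ f₂ : G → A} (h1 : HeckeMem H γ f₁) (h2 : HeckeMem H γ f₂) :
    HeckeMem H γ (heckeConv γ R f₁ f₂) := by
  constructor
  · intro h k g hh hk
    have hfin : (R ∩ Function.support (fun s => f₁ s * γ s (f₂ (s⁻¹ * g)))).Finite := by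
      apply (finite_inter_support hR h1).subset
      apply Set.inter_subset_inter_right
      intro s hs
      rw [Function.mem_support] at hs ⊢
      intro hz; exact hs (by rw [hz, zero_mul])
    have step1 : heckeConv γ R f₁ f₂ (h * g * k)
        = ∑ᶠ s ∈ (h * ·) '' R, f₁ s * γ s (f₂ (s⁻¹ * (h * g * k))) :=
      sum_rep_eq hR (isRep_smul hR h) _
        (fun s h' hh' => conv_summand_inv hγ1 hγm h1 h2 (h * g * k) s h' hh')
    rw [step1, finsum_mem_image (mul_right_injective h).injOn]
    have step2 : ∀ s ∈ R, f₁ (h * s) * γ (h * s) (f₂ ((h * s)⁻¹ * (h * g * k)))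
        = γ h (f₁ s * γ s (f₂ (s⁻¹ * g))) := by
      intro s _
      have e1 : (h * s)⁻¹ * (h * g * k) = (s⁻¹ * g) * k := by group
      rw [e1, hm_right_inv hγ1 h2 hk, hm_left_eq h1 hh, hγm, map_mul]
    rw [finsum_mem_congr rfl step2]
    exact (AddMonoidHom.map_finsum_mem'
      (AddMonoidHom.mk' (γ h) (fun a b => map_add (γ h) a b)) hfin).symm
  · apply Set.Finite.subset (finite_mk_biUnion (finite_inter_support hR h1) h2)
    exact Set.image_mono support_conv_subset

lemma conv_assoc (hγ1 : γ 1 = RingEquiv.refl A)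
    (hγm : ∀ (g h : G) (a : A), γ (g * h) a = γ g (γ h a))
    {R : Set G} (hR : IsRep H R)
    {f₁ f₂ f₃ : G → A} (h1 : HeckeMem H γ f₁) (h2 : HeckeMem H γ f₂)
    (h3 : HeckeMem H γ f₃) :
    heckeConv γ R (heckeConv γ R f₁ f₂) f₃ = heckeConv γ R f₁ (heckeConv γ R f₂ f₃) := by
  funext g
  set c : G → G → A := fun s t => f₁ s * γ s (f₂ (s⁻¹ * t)) * γ t (f₃ (t⁻¹ * g)) with hc
  set c' : G → G → A :=
    fun s t => f₁ s * γ s (f₂ t) * γ (s * t) (f₃ (t⁻¹ * (s⁻¹ * g))) with hc'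
  have hS₁ : (R ∩ Function.support f₁).Finite := finite_inter_support hR h1
  set U : Set G := ⋃ s ∈ R ∩ Function.support f₁, s • Function.support f₂ with hU
  have hT : (R ∩ U).Finite := by
    apply Set.Finite.of_finite_image _ ((isRep_injOn_mk hR).mono inter_subset_left)
    exact (finite_mk_biUnion hS₁ h2).subset (Set.image_mono inter_subset_right)
  have hz1 : ∀ s t : G, f₁ s = 0 → c s t = 0 := by
    intro s t h; simp only [hc, h, zero_mul]
  have hz1' : ∀ s t : G, f₁ s = 0 → c' s t = 0 := by
    intro s t h; simp only [hc', h, zero_mul]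
  have hz2 : ∀ s ∈ R ∩ Function.support f₁, ∀ t, t ∉ U → c s t = 0 := by
    intro s hs t ht
    have hf2 : f₂ (s⁻¹ * t) = 0 := by
      by_contra h
      exact ht (Set.mem_biUnion hs
        (Set.mem_smul_set.mpr ⟨s⁻¹ * t, h, by rw [smul_eq_mul]; group⟩))
    simp only [hc, hf2, map_zero, mul_zero, zero_mul]
  have L1 : heckeConv γ R (heckeConv γ R f₁ f₂) f₃ g = ∑ᶠ t ∈ R, ∑ᶠ s ∈ R, c s t := by
    apply finsum_mem_congr rfl
    intro t _
    have hfin : (R ∩ Function.support (fun s => f₁ s * γ s (f₂ (s⁻¹ * t)))).Finite := by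
      apply hS₁.subset
      apply Set.inter_subset_inter_right
      intro s hs
      rw [Function.mem_support] at hs ⊢
      intro hz; exact hs (by rw [hz, zero_mul])
    exact AddMonoidHom.map_finsum_mem'
      (AddMonoidHom.mulRight (γ t (f₃ (t⁻¹ * g)))) hfin
  have L2 : ∀ t ∈ R, ∑ᶠ s ∈ R, c s t = ∑ᶠ s ∈ R ∩ Function.support f₁, c s t := by
    intro t _
    exact finsum_mem_restrict _ (fun s _ hs => hz1 s t (Function.notMem_support.mp hs))
  have L3 : ∑ᶠ t ∈ R, ∑ᶠ s ∈ R ∩ Function.support f₁, c s t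
      = ∑ᶠ t ∈ R ∩ U, ∑ᶠ s ∈ R ∩ Function.support f₁, c s t :=
    finsum_mem_restrict _
      (fun t _ ht => finsum_mem_of_eqOn_zero (fun s hs => hz2 s hs t ht))
  have L5 : ∀ s ∈ R ∩ Function.support f₁, ∑ᶠ t ∈ R ∩ U, c s t = ∑ᶠ t ∈ R, c s t :=
    fun s hs => (finsum_mem_restrict _ (fun t _ ht => hz2 s hs t ht)).symm
  have L6 : ∀ s ∈ R ∩ Function.support f₁,
      ∑ᶠ t ∈ R, c s t = ∑ᶠ t ∈ R, c' s t := by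
    intro s _
    have inv : ∀ t h, h ∈ H → c s (t * h) = c s t := by
      intro t h hh
      simp only [hc]
      have e1 : s⁻¹ * (t * h) = (s⁻¹ * t) * h := by group
      rw [e1, hm_right_inv hγ1 h2 hh]
      congr 1
      have e2 : (t * h)⁻¹ * g = h⁻¹ * (t⁻¹ * g) := by group
      rw [e2, hm_left_eq h3 (inv_mem hh), hγm, gamma_cancel hγ1 hγm]
    calc ∑ᶠ t ∈ R, c s t = ∑ᶠ t ∈ (s * ·) '' R, c s t :=
          sum_rep_eq hR (isRep_smul hR s) _ inv
      _ = ∑ᶠ t ∈ R, c s (s * t) := finsum_mem_image (mul_right_injective s).injOn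
      _ = ∑ᶠ t ∈ R, c' s t := by
          apply finsum_mem_congr rfl
          intro t _
          simp only [hc, hc']
          have e1 : s⁻¹ * (s * t) = t := by group
          have e2 : (s * t)⁻¹ * g = t⁻¹ * (s⁻¹ * g) := by group
          rw [e1, e2]
  have R1 : heckeConv γ R f₁ (heckeConv γ R f₂ f₃) g = ∑ᶠ s ∈ R, ∑ᶠ t ∈ R, c' s t := by
    apply finsum_mem_congr rfl
    intro s _
    have hfin : (R ∩ Function.support
        (fun t => f₂ t * γ t (f₃ (t⁻¹ * (s⁻¹ * g))))).Finite := by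
      apply (finite_inter_support hR h2).subset
      apply Set.inter_subset_inter_right
      intro t ht
      rw [Function.mem_support] at ht ⊢
      intro hz; exact ht (by rw [hz, zero_mul])
    have e1 : γ s (∑ᶠ t ∈ R, f₂ t * γ t (f₃ (t⁻¹ * (s⁻¹ * g))))
        = ∑ᶠ t ∈ R, γ s (f₂ t * γ t (f₃ (t⁻¹ * (s⁻¹ * g)))) :=
      AddMonoidHom.map_finsum_mem'
        (AddMonoidHom.mk' (γ s) (fun a b => map_add (γ s) a b)) hfin
    have hfin2 : (R ∩ Function.support
        (fun t => γ s (f₂ t * γ t (f₃ (t⁻¹ * (s⁻¹ * g)))))).Finite := by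
      apply (finite_inter_support hR h2).subset
      apply Set.inter_subset_inter_right
      intro t ht
      rw [Function.mem_support] at ht ⊢
      intro hz; exact ht (by rw [hz, zero_mul, map_zero])
    show f₁ s * γ s (∑ᶠ t ∈ R, f₂ t * γ t (f₃ (t⁻¹ * (s⁻¹ * g)))) = _
    rw [e1]
    rw [show f₁ s * ∑ᶠ t ∈ R, γ s (f₂ t * γ t (f₃ (t⁻¹ * (s⁻¹ * g))))
        = ∑ᶠ t ∈ R, f₁ s * γ s (f₂ t * γ t (f₃ (t⁻¹ * (s⁻¹ * g)))) from
      AddMonoidHom.map_finsum_mem' (AddMonoidHom.mulLeft (f₁ s)) hfin2]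
    apply finsum_mem_congr rfl
    intro t _
    show f₁ s * γ s (f₂ t * γ t (f₃ (t⁻¹ * (s⁻¹ * g)))) = c' s t
    simp only [hc']
    rw [map_mul, ← hγm, ← mul_assoc]
  rw [L1, finsum_mem_congr rfl L2, L3,
    finsum_mem_comm (fun t s => c s t) hT hS₁,
    finsum_mem_congr rfl (fun s hs => (L5 s hs).trans (L6 s hs)), R1]
  exact (finsum_mem_restrict _ (fun s _ hs =>
    finsum_mem_of_eqOn_zero (fun t _ => hz1' s t (Function.notMem_support.mp hs)))).symm

lemma one_mem' : HeckeMem H γ (heckeOne H (A := A)) := by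
  constructor
  · intro h k g hh hk
    show (if h * g * k ∈ H then (1 : A) else 0) = γ h (if g ∈ H then 1 else 0)
    by_cases hg : g ∈ H
    · rw [if_pos hg, if_pos (H.mul_mem (H.mul_mem hh hg) hk), map_one]
    · rw [if_neg hg, if_neg, map_zero]
      intro hcon
      apply hg
      have := H.mul_mem (H.mul_mem (H.inv_mem hh) hcon) (H.inv_mem hk)
      have e : h⁻¹ * (h * g * k) * k⁻¹ = g := by group
      rwa [e] at this
  · apply Set.Finite.subset (Set.finite_singleton ((1 : G) : G ⧸ H))
    rintro q ⟨g, hg, rfl⟩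
    have hgH : g ∈ H := by
      by_contra hcon
      exact hg (if_neg hcon)
    refine Set.mem_singleton_iff.mpr ?_
    exact QuotientGroup.eq.mpr (by rw [mul_one]; exact inv_mem hgH)

lemma one_conv (hγ1 : γ 1 = RingEquiv.refl A)
    (hγm : ∀ (g h : G) (a : A), γ (g * h) a = γ g (γ h a))
    {R : Set G} (hR : IsRep H R) {f : G → A} (hf : HeckeMem H γ f) :
    heckeConv γ R (heckeOne H) f = f := by
  funext g
  obtain ⟨r, ⟨hrR, hrH'⟩, hu⟩ := hR 1
  have hrH : r ∈ H := by
    rw [mul_one] at hrH'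
    exact (inv_mem_iff).mp hrH'
  have step : heckeConv γ R (heckeOne H) f g
      = ∑ᶠ s ∈ R ∩ ({r} : Set G), heckeOne H s * γ s (f (s⁻¹ * g)) := by
    apply finsum_mem_restrict
    intro s hsR hs
    have : heckeOne H s = (0 : A) := by
      apply if_neg
      intro hsH
      exact hs (hu s ⟨hsR, by rw [mul_one]; exact inv_mem hsH⟩)
    rw [this, zero_mul]
  rw [step, Set.inter_eq_right.mpr (Set.singleton_subset_iff.mpr hrR),
    finsum_mem_singleton]
  have h1 : heckeOne H r = (1 : A) := if_pos hrH
  rw [h1, one_mul, ← hm_left_eq hf hrH]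
  congr 1
  group

lemma conv_one (hγ1 : γ 1 = RingEquiv.refl A)
    (hγm : ∀ (g h : G) (a : A), γ (g * h) a = γ g (γ h a))
    {R : Set G} (hR : IsRep H R) {f : G → A} (hf : HeckeMem H γ f) :
    heckeConv γ R f (heckeOne H) = f := by
  funext g
  obtain ⟨r, ⟨hrR, hrH⟩, hu⟩ := hR g
  have step : heckeConv γ R f (heckeOne H) g
      = ∑ᶠ s ∈ R ∩ ({r} : Set G), f s * γ s (heckeOne H (s⁻¹ * g)) := by
    apply finsum_mem_restrict
    intro s hsR hs
    have : heckeOne H (s⁻¹ * g) = (0 : A) := by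
      apply if_neg
      intro hsH
      exact hs (hu s ⟨hsR, hsH⟩)
    rw [this, map_zero, mul_zero]
  rw [step, Set.inter_eq_right.mpr (Set.singleton_subset_iff.mpr hrR),
    finsum_mem_singleton]
  have h1 : heckeOne H (r⁻¹ * g) = (1 : A) := if_pos hrH
  rw [h1, map_one, mul_one]
  have : f g = f (r * (r⁻¹ * g)) := by congr 1; group
  rw [this, hm_right_inv hγ1 hf hrH]

end Aux

/-- Let `H < G` be almost normal with `G/H` countable, `A` an
algebra with a `G`-action `γ`, and `ℂ[A;G,H]` the space of `H`-equivariant functions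
`f : G → A` finitely supported mod `H`. Then the convolution product
`(f₁f₂)(g) = ∑_{s ∈ ⟨G/H⟩} f₁(s)·γ_s(f₂(s⁻¹g))` is well defined (independent of the
system of representatives) and associative, making `ℂ[A;G,H]` a unital associative
algebra. -/
theorem stmt_14 {G A : Type*} [Group G] [Ring A] [Algebra ℂ A]
    (H : Subgroup G) [Countable (G ⧸ H)]
    (halm : ∀ g : G,
      ((H ⊓ H.map (MulAut.conj g).toMonoidHom).relIndex H ≠ 0) ∧
      ((H ⊓ H.map (MulAut.conj g).toMonoidHom).relIndex
        (H.map (MulAut.conj g).toMonoidHom) ≠ 0))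
    (γ : G → A ≃+* A)
    (hγ1 : γ 1 = RingEquiv.refl A)
    (hγm : ∀ (g h : G) (a : A), γ (g * h) a = γ g (γ h a)) :
    (∀ R R' : Set G, IsRep H R → IsRep H R' →
      ∀ f₁ f₂ : G → A, HeckeMem H γ f₁ → HeckeMem H γ f₂ →
        heckeConv γ R f₁ f₂ = heckeConv γ R' f₁ f₂) ∧
    (∀ R : Set G, IsRep H R →
      ∀ f₁ f₂ : G → A, HeckeMem H γ f₁ → HeckeMem H γ f₂ →
        HeckeMem H γ (heckeConv γ R f₁ f₂)) ∧
    (∀ R : Set G, IsRep H R →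
      ∀ f₁ f₂ f₃ : G → A, HeckeMem H γ f₁ → HeckeMem H γ f₂ → HeckeMem H γ f₃ →
        heckeConv γ R (heckeConv γ R f₁ f₂) f₃ = heckeConv γ R f₁ (heckeConv γ R f₂ f₃)) ∧
    (HeckeMem H γ (heckeOne H (A := A))) ∧
    (∀ R : Set G, IsRep H R →
      ∀ f : G → A, HeckeMem H γ f →
        heckeConv γ R (heckeOne H) f = f ∧ heckeConv γ R f (heckeOne H) = f) := by
  refine ⟨fun R R' hR hR' f₁ f₂ h1 h2 => conv_wd hγ1 hγm hR hR' h1 h2,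
    fun R hR f₁ f₂ h1 h2 => conv_mem hγ1 hγm hR h1 h2,
    fun R hR f₁ f₂ f₃ h1 h2 h3 => conv_assoc hγ1 hγm hR h1 h2 h3,
    one_mem',
    fun R hR f hf => ⟨one_conv hγ1 hγm hR hf, conv_one hγ1 hγm hR hf⟩⟩
end
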